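/- arXiv:gr-qc/9709052 — 2 statements merged into one kernel-verified Lean document; each statement's English description precedes it below -/
import Mathlib

section
/- If E₁, E₂, E₃ ∈ ℝ³ (identified with bivectors) arise as E₁ = e₂ × e₃, E₂ = e₃ × e₁, E₃ = e₁ × e₂ for linearly independent e₁, e₂, e₃, then the eᵢ are determined by the Eᵢ up to the simultaneous sign change eᵢ ↦ −eᵢ; that is, if eᵢ and eᵢ' are both linearly independent triples giving the same Eᵢ, then either eᵢ' = eᵢ for all i or eᵢ' = −eᵢ for all i. -/
open Matrix

/-! Since `(w × u) × (u × v) = [u, v, w] u`, the products `E₂ × E₃, E₃ × E₁, E₁ × E₂` recover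
`V e₁, V e₂, V e₃` with `V = [e₁, e₂, e₃]`, and `[E₁, E₂, E₃] = V²`. Hence a second triple with the
same `Eᵢ` has volume `V' = ±V`, and `V' eᵢ' = V eᵢ` gives `eᵢ' = ±eᵢ` with a common sign. -/

section CommRing

variable {R : Type*} [CommRing R]

theorem cross_cross_cross_eq_smul (u v w : Fin 3 → R) :
    (w ⨯₃ u) ⨯₃ (u ⨯₃ v) = (u ⬝ᵥ v ⨯₃ w) • u := by
  rw [cross_cross_eq_smul_sub_smul', dot_cross_self, zero_smul, sub_zero, dotProduct_comm,
    ← triple_product_permutation u]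

theorem triple_product_cross_cross_cross (u v w : Fin 3 → R) :
    (v ⨯₃ w) ⬝ᵥ (w ⨯₃ u) ⨯₃ (u ⨯₃ v) = (u ⬝ᵥ v ⨯₃ w) ^ 2 := by
  rw [cross_cross_cross_eq_smul, dotProduct_smul, smul_eq_mul, dotProduct_comm (v ⨯₃ w), sq]

theorem smul_eq_smul_of_cross_eq_cross {u v w u' v' w' : Fin 3 → R}
    (hwu : w' ⨯₃ u' = w ⨯₃ u) (huv : u' ⨯₃ v' = u ⨯₃ v) :
    (u' ⬝ᵥ v' ⨯₃ w') • u' = (u ⬝ᵥ v ⨯₃ w) • u := by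
  rw [← cross_cross_cross_eq_smul, ← cross_cross_cross_eq_smul, hwu, huv]

end CommRing

theorem triple_product_ne_zero_of_linearIndependent {K : Type*} [Field K] {u v w : Fin 3 → K}
    (h : LinearIndependent K ![u, v, w]) : u ⬝ᵥ v ⨯₃ w ≠ 0 := by
  rw [triple_product_eq_det]
  exact ((isUnit_iff_isUnit_det _).mp (linearIndependent_rows_iff_isUnit.mp h)).ne_zero

theorem triple_determined_by_cross_products_up_to_parity_general
    (e₁ e₂ e₃ e₁' e₂' e₃' : Fin 3 → ℝ)
    (h : LinearIndependent ℝ ![e₁, e₂, e₃])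
    (h1 : e₂' ⨯₃ e₃' = e₂ ⨯₃ e₃)
    (h2 : e₃' ⨯₃ e₁' = e₃ ⨯₃ e₁)
    (h3 : e₁' ⨯₃ e₂' = e₁ ⨯₃ e₂) :
    (e₁' = e₁ ∧ e₂' = e₂ ∧ e₃' = e₃) ∨ (e₁' = -e₁ ∧ e₂' = -e₂ ∧ e₃' = -e₃) := by
  set V := e₁ ⬝ᵥ e₂ ⨯₃ e₃
  set V' := e₁' ⬝ᵥ e₂' ⨯₃ e₃'
  have hV : V ≠ 0 := triple_product_ne_zero_of_linearIndependent h
  have k₁ : V' • e₁' = V • e₁ := smul_eq_smul_of_cross_eq_cross h2 h3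
  have k₂ : V' • e₂' = V • e₂ := by
    simpa only [← triple_product_permutation e₁, ← triple_product_permutation e₁'] using
      smul_eq_smul_of_cross_eq_cross h3 h1
  have k₃ : V' • e₃' = V • e₃ := by
    simpa only [← triple_product_permutation e₂, ← triple_product_permutation e₁,
      ← triple_product_permutation e₂', ← triple_product_permutation e₁'] using
      smul_eq_smul_of_cross_eq_cross h1 h2
  have hsq : V' ^ 2 = V ^ 2 := by
    rw [← triple_product_cross_cross_cross, ← triple_product_cross_cross_cross, h1, h2, h3]
  rcases sq_eq_sq_iff_eq_or_eq_neg.mp hsq with hV' | hV'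
  · left
    rw [hV'] at k₁ k₂ k₃
    exact ⟨smul_right_injective _ hV k₁, smul_right_injective _ hV k₂,
      smul_right_injective _ hV k₃⟩
  · right
    rw [hV', neg_smul, ← smul_neg] at k₁ k₂ k₃
    exact ⟨neg_eq_iff_eq_neg.mp (smul_right_injective _ hV k₁),
      neg_eq_iff_eq_neg.mp (smul_right_injective _ hV k₂),
      neg_eq_iff_eq_neg.mp (smul_right_injective _ hV k₃)⟩

/-- If two linearly independent triples `e₁,e₂,e₃` and `e₁',e₂',e₃'` in `ℝ³` give the
same face bivectors `E₁ = e₂ × e₃`, `E₂ = e₃ × e₁`, `E₃ = e₁ × e₂`, then either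
`eᵢ' = eᵢ` for all `i` or `eᵢ' = −eᵢ` for all `i`. -/
theorem triple_determined_by_cross_products_up_to_parity
    (e₁ e₂ e₃ e₁' e₂' e₃' : Fin 3 → ℝ)
    (h : LinearIndependent ℝ ![e₁, e₂, e₃])
    (h' : LinearIndependent ℝ ![e₁', e₂', e₃'])
    (h1 : e₂' ⨯₃ e₃' = e₂ ⨯₃ e₃)
    (h2 : e₃' ⨯₃ e₁' = e₃ ⨯₃ e₁)
    (h3 : e₁' ⨯₃ e₂' = e₁ ⨯₃ e₂) :
    (e₁' = e₁ ∧ e₂' = e₂ ∧ e₃' = e₃) ∨ (e₁' = -e₁ ∧ e₂' = -e₂ ∧ e₃' = -e₃) :=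
  triple_determined_by_cross_products_up_to_parity_general e₁ e₂ e₃ e₁' e₂' e₃' h h1 h2 h3
end

section
/- Let v₁,…,v₄ and w₁,…,w₄ be two bases of ℝ⁴ with v_a ∧ v_b = w_a ∧ w_b for all a, b. Then w_a = v_a for all a or w_a = −v_a for all a. -/
/-!
If `vₐ ∧ v_b = wₐ ∧ w_b` for all `a, b`, then `wₐ ∧ vₐ ∧ v_b = wₐ ∧ wₐ ∧ w_b = 0`, so `wₐ` lies in
the plane spanned by `vₐ` and `v_b` for every `b ≠ a`. With at least three independent vectors
these planes meet in the line `K vₐ`, hence `wₐ = cₐ vₐ`. Comparing `vₐ ∧ v_b ≠ 0` with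
`wₐ ∧ w_b = cₐ c_b vₐ ∧ v_b` gives `cₐ c_b = 1` for all `a ≠ b`, which forces all `cₐ` to be
equal to a common square root of `1`.
-/

open ExteriorAlgebra

variable {K E : Type*} [Field K] [AddCommGroup E] [Module K E]

theorem ιMulti_ne_zero_of_linearIndependent {n : ℕ} {u : Fin n → E}
    (hu : LinearIndependent K u) : ιMulti K n u ≠ 0 := by
  have := (exteriorPower.ιMulti_family_linearIndependent_field (n := n) hu).ne_zero
    (Set.powersetCard.ofFinEmbEquiv (RelEmbedding.refl (· ≤ ·)))
  simpa [exteriorPower.ιMulti_family, ← Submodule.coe_eq_zero] using this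

theorem mem_span_of_ι_mul_ιMulti_eq_zero {n : ℕ} {x : E} {u : Fin n → E}
    (hu : LinearIndependent K u) (hx : ι K x * ιMulti K n u = 0) :
    x ∈ Submodule.span K (Set.range u) := by
  by_contra hxu
  refine ιMulti_ne_zero_of_linearIndependent (linearIndependent_finCons.mpr ⟨hu, hxu⟩) ?_
  simpa [Matrix.vecTail, Function.comp_def] using hx

variable {I : Type*}

theorem LinearIndependent.span_image_inf_span_image {v : I → E}
    (hv : LinearIndependent K v) (s t : Set I) :
    Submodule.span K (v '' s) ⊓ Submodule.span K (v '' t) = Submodule.span K (v '' (s ∩ t)) := by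
  refine le_antisymm ?_ (le_inf (Submodule.span_mono (Set.image_mono Set.inter_subset_left))
    (Submodule.span_mono (Set.image_mono Set.inter_subset_right)))
  intro x hx
  obtain ⟨hs, ht⟩ := Submodule.mem_inf.mp hx
  rw [Finsupp.mem_span_image_iff_linearCombination] at hs ht ⊢
  obtain ⟨l, hls, rfl⟩ := hs
  obtain ⟨l', hlt, hl⟩ := ht
  have hll' : l' = l := hv.finsuppLinearCombination_injective hl
  refine ⟨l, ?_, rfl⟩
  rw [Finsupp.supported_inter]
  exact ⟨hls, hll' ▸ hlt⟩

theorem LinearIndependent.pair_of_ne {v : I → E} (hv : LinearIndependent K v)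
    {a b : I} (hab : a ≠ b) : LinearIndependent K ![v a, v b] := by
  have := hv.comp ![a, b] (by
    intro i j; fin_cases i <;> fin_cases j <;> simp [hab, hab.symm])
  convert this using 1
  ext i; fin_cases i <;> rfl

theorem forall_eq_one_or_forall_eq_neg_one_of_mul_eq_one (hI : 3 ≤ ENat.card I)
    {c : I → K} (hc : ∀ a b, a ≠ b → c a * c b = 1) : (∀ a, c a = 1) ∨ (∀ a, c a = -1) := by
  have hconst : ∀ a b, c a = c b := by
    intro a b
    obtain ⟨d, hda, hdb⟩ := ENat.exists_ne_ne_of_three_le hI a b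
    have hd : c d ≠ 0 := left_ne_zero_of_mul_eq_one (hc d a hda)
    exact mul_right_cancel₀ hd ((hc a d hda.symm).trans (hc b d hdb.symm).symm)
  have : Nontrivial I := (ENat.one_lt_card_iff_nontrivial I).mp (lt_of_lt_of_le (by norm_num) hI)
  obtain ⟨a, b, hab⟩ := exists_pair_ne I
  have hsq : c a * c a = 1 := hconst a b ▸ hc a b hab
  rcases mul_self_eq_one_iff.mp hsq with h1 | h1
  · exact .inl fun i ↦ hconst i a ▸ h1
  · exact .inr fun i ↦ hconst i a ▸ h1

theorem mem_span_image_pair_of_ι_mul_ι_eq {v w : I → E} (hv : LinearIndependent K v)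
    (h : ∀ a b, ι K (v a) * ι K (v b) = ι K (w a) * ι K (w b)) {a b : I} (hab : a ≠ b) :
    w a ∈ Submodule.span K (v '' {a, b}) := by
  have hzero : ι K (w a) * ιMulti K 2 ![v a, v b] = 0 := by
    calc ι K (w a) * ιMulti K 2 ![v a, v b] = ι K (w a) * (ι K (v a) * ι K (v b)) := by simp
      _ = ι K (w a) * ι K (w a) * ι K (w b) := by rw [h, mul_assoc]
      _ = 0 := by rw [ι_sq_zero, zero_mul]
  simpa [Set.image_pair, Set.pair_comm] using
    mem_span_of_ι_mul_ιMulti_eq_zero (hv.pair_of_ne hab) hzero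

theorem exists_smul_eq_of_ι_mul_ι_eq (hI : 3 ≤ ENat.card I) {v w : I → E}
    (hv : LinearIndependent K v) (h : ∀ a b, ι K (v a) * ι K (v b) = ι K (w a) * ι K (w b))
    (a : I) : ∃ c : K, c • v a = w a := by
  obtain ⟨b, hba, -⟩ := ENat.exists_ne_ne_of_three_le hI a a
  obtain ⟨d, hda, hdb⟩ := ENat.exists_ne_ne_of_three_le hI a b
  have hmem : w a ∈ Submodule.span K (v '' ({a, b} ∩ {a, d})) := by
    rw [← hv.span_image_inf_span_image]
    exact ⟨mem_span_image_pair_of_ι_mul_ι_eq hv h hba.symm,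
      mem_span_image_pair_of_ι_mul_ι_eq hv h hda.symm⟩
  have hinter : ({a, b} ∩ {a, d} : Set I) = {a} := by
    rw [← Set.insert_inter_distrib, (Set.singleton_inter_eq_empty (s := {d})).mpr hdb.symm,
      LawfulSingleton.insert_empty_eq]
  rwa [hinter, Set.image_singleton, Submodule.mem_span_singleton] at hmem

theorem eq_or_eq_neg_of_ι_mul_ι_eq (hI : 3 ≤ ENat.card I) {v w : I → E}
    (hv : LinearIndependent K v) (h : ∀ a b, ι K (v a) * ι K (v b) = ι K (w a) * ι K (w b)) :
    (∀ a, w a = v a) ∨ (∀ a, w a = -v a) := by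
  choose c hc using exists_smul_eq_of_ι_mul_ι_eq hI hv h
  have hprod : ∀ a b, a ≠ b → c a * c b = 1 := by
    intro a b hab
    have hne : ι K (v a) * ι K (v b) ≠ 0 := by
      simpa using ιMulti_ne_zero_of_linearIndependent (hv.pair_of_ne hab)
    refine smul_left_injective K hne ?_
    calc (c a * c b) • (ι K (v a) * ι K (v b)) = ι K (c a • v a) * ι K (c b • v b) := by
          rw [map_smul, map_smul, smul_mul_smul_comm]
      _ = ι K (v a) * ι K (v b) := by rw [hc, hc, h]
      _ = (1 : K) • (ι K (v a) * ι K (v b)) := (one_smul K _).symm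
  rcases forall_eq_one_or_forall_eq_neg_one_of_mul_eq_one hI hprod with h1 | h1
  · exact .inl fun a ↦ by rw [← hc, h1, one_smul]
  · exact .inr fun a ↦ by rw [← hc, h1, neg_one_smul]

theorem basis_determined_by_bivectors_up_to_parity_general
    (v w : Fin 4 → (Fin 4 → ℝ))
    (hv : LinearIndependent ℝ v)
    (h : ∀ a b, ExteriorAlgebra.ι ℝ (v a) * ExteriorAlgebra.ι ℝ (v b)
        = ExteriorAlgebra.ι ℝ (w a) * ExteriorAlgebra.ι ℝ (w b)) :
    (∀ a, w a = v a) ∨ (∀ a, w a = - v a) :=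
  eq_or_eq_neg_of_ι_mul_ι_eq (by norm_num) hv h

/-- If `v₁,…,v₄` and `w₁,…,w₄` are two bases of `ℝ⁴` with `v_a ∧ v_b = w_a ∧ w_b`
for all `a, b`, then `w_a = v_a` for all `a`, or `w_a = −v_a` for all `a`. -/
theorem basis_determined_by_bivectors_up_to_parity
    (v w : Fin 4 → (Fin 4 → ℝ))
    (hv : LinearIndependent ℝ v) (hw : LinearIndependent ℝ w)
    (h : ∀ a b, ExteriorAlgebra.ι ℝ (v a) * ExteriorAlgebra.ι ℝ (v b)
        = ExteriorAlgebra.ι ℝ (w a) * ExteriorAlgebra.ι ℝ (w b)) :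
    (∀ a, w a = v a) ∨ (∀ a, w a = - v a) :=
  basis_determined_by_bivectors_up_to_parity_general v w hv h
end
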